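/- Let N = 4 and θ = (0, π/2, π, 3π/2) (the regular 4-gon). Then θ is a critical point of V, and the Hessian of V at θ has eigenvalues 0, 2, −1/2, −1/2 (with −1/2 of multiplicity two); in particular the Hessian has both a positive and a negative eigenvalue, so the 4-gon is a nondegenerate saddle point of V. -/

import Mathlib

open Real Finset Matrix

/-- The limit potential of the (1+N)-vortex problem:
`V(θ) = -∑_{i<j} (cos(θᵢ-θⱼ) + (1/2)·log(2 - 2cos(θᵢ-θⱼ)))`. -/
noncomputable def vortexPotential (N : ℕ) (θ : Fin N → ℝ) : ℝ :=
  - ∑ i : Fin N, ∑ j : Fin N,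
      if i < j then
        Real.cos (θ i - θ j) + (1 / 2) * Real.log (2 - 2 * Real.cos (θ i - θ j))
      else 0

/-- The Hessian matrix of the potential `V` at `θ`. -/
noncomputable def vortexHessian (N : ℕ) (θ : Fin N → ℝ) : Matrix (Fin N) (Fin N) ℝ :=
  fun i j => iteratedFDeriv ℝ 2 (vortexPotential N) θ ![Pi.single i 1, Pi.single j 1]


/-!
`V` is a sum of pair interactions `f (θᵢ - θⱼ)` with `f x = cos x + ½ log (2 - 2 cos x)`, so its
gradient and Hessian are `-∑ f' (θᵢ - θⱼ) (eᵢ - eⱼ)` and `-∑ f'' (θᵢ - θⱼ) (eᵢ - eⱼ)(eᵢ - eⱼ)ᵀ`.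
At the square, `f'` vanishes at `±π` and the terms with `f' (±π/2) = ∓1/2` cancel at each
vertex, while `f'' = -1/2` at `±π/2, ±3π/2` and `f'' = 3/4` at `±π`. The Hessian is therefore
the symmetric circulant matrix with first row `(1/4, -1/2, 3/4, -1/2)`, which the characters of
`ℤ/4` diagonalize.
-/

open Topology

noncomputable def pairPotential (x : ℝ) : ℝ := cos x + 1 / 2 * log (2 - 2 * cos x)

noncomputable def pairPotentialDeriv (x : ℝ) : ℝ := -sin x + sin x / (2 - 2 * cos x)

noncomputable def pairPotentialDeriv2 (x : ℝ) : ℝ := -cos x - 1 / (2 - 2 * cos x)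

lemma two_sub_two_mul_cos_pos {x : ℝ} (hx : cos x ≠ 1) : 0 < 2 - 2 * cos x := by
  linarith [lt_of_le_of_ne (cos_le_one x) hx]

lemma hasDerivAt_two_sub_two_mul_cos (x : ℝ) :
    HasDerivAt (fun y => 2 - 2 * cos y) (2 * sin x) x := by
  simpa using ((hasDerivAt_cos x).const_mul 2).const_sub 2

lemma hasDerivAt_pairPotential {x : ℝ} (hx : cos x ≠ 1) :
    HasDerivAt pairPotential (pairPotentialDeriv x) x := by
  have hlog := (hasDerivAt_two_sub_two_mul_cos x).log (two_sub_two_mul_cos_pos hx).ne'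
  refine ((hasDerivAt_cos x).add (hlog.const_mul (1 / 2))).congr_deriv ?_
  unfold pairPotentialDeriv
  field_simp

lemma hasDerivAt_pairPotentialDeriv {x : ℝ} (hx : cos x ≠ 1) :
    HasDerivAt pairPotentialDeriv (pairPotentialDeriv2 x) x := by
  have hpos := two_sub_two_mul_cos_pos hx
  refine ((hasDerivAt_sin x).neg.add
    ((hasDerivAt_sin x).div (hasDerivAt_two_sub_two_mul_cos x) hpos.ne')).congr_deriv ?_
  unfold pairPotentialDeriv2
  field_simp
  linear_combination -sin_sq_add_cos_sq x

section VortexPotential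

variable {N : ℕ} {θ : Fin N → ℝ}

def IsCollisionFree (θ : Fin N → ℝ) : Prop := ∀ i j, i < j → cos (θ i - θ j) ≠ 1

noncomputable def coordDiff (i j : Fin N) : (Fin N → ℝ) →L[ℝ] ℝ :=
  (ContinuousLinearMap.proj i : (Fin N → ℝ) →L[ℝ] ℝ) - ContinuousLinearMap.proj j

lemma coordDiff_apply (i j : Fin N) (v : Fin N → ℝ) : coordDiff i j v = v i - v j := rfl

noncomputable def vortexGradient (θ : Fin N → ℝ) : (Fin N → ℝ) →L[ℝ] ℝ :=
  -∑ i, ∑ j, if i < j then pairPotentialDeriv (θ i - θ j) • coordDiff i j else 0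

noncomputable def vortexHessianForm (θ : Fin N → ℝ) :
    (Fin N → ℝ) →L[ℝ] (Fin N → ℝ) →L[ℝ] ℝ :=
  -∑ i, ∑ j, if i < j then
    (pairPotentialDeriv2 (θ i - θ j) • coordDiff i j).smulRight (coordDiff i j) else 0

lemma IsCollisionFree.eventually_nhds (hθ : IsCollisionFree θ) :
    ∀ᶠ θ' in 𝓝 θ, IsCollisionFree θ' := by
  simp only [IsCollisionFree, Filter.eventually_all]
  intro i j hij
  have hcont : Continuous fun θ' : Fin N → ℝ => cos (θ' i - θ' j) := by fun_prop
  exact hcont.continuousAt.eventually_ne (hθ i j hij)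

lemma hasFDerivAt_vortexPotential (hθ : IsCollisionFree θ) :
    HasFDerivAt (vortexPotential N) (vortexGradient θ) θ := by
  refine (HasFDerivAt.fun_sum fun i _ => HasFDerivAt.fun_sum fun j _ => ?_).neg
  by_cases hij : i < j
  · simp only [hij, if_true]
    have hpair := hasDerivAt_pairPotential (hθ i j hij)
    rw [← coordDiff_apply] at hpair
    exact hpair.comp_hasFDerivAt θ (coordDiff i j).hasFDerivAt
  · simp only [hij, if_false]
    exact hasFDerivAt_const 0 θ

lemma hasFDerivAt_vortexGradient (hθ : IsCollisionFree θ) :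
    HasFDerivAt vortexGradient (vortexHessianForm θ) θ := by
  refine (HasFDerivAt.fun_sum fun i _ => HasFDerivAt.fun_sum fun j _ => ?_).neg
  by_cases hij : i < j
  · simp only [hij, if_true]
    have hpair := hasDerivAt_pairPotentialDeriv (hθ i j hij)
    rw [← coordDiff_apply] at hpair
    exact (hpair.comp_hasFDerivAt θ (coordDiff i j).hasFDerivAt).smul_const (coordDiff i j)
  · simp only [hij, if_false]
    exact hasFDerivAt_const 0 θ

lemma fderiv_vortexPotential_apply (hθ : IsCollisionFree θ) (v : Fin N → ℝ) :
    fderiv ℝ (vortexPotential N) θ v =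
      -∑ i, ∑ j, if i < j then pairPotentialDeriv (θ i - θ j) * (v i - v j) else 0 := by
  simp only [(hasFDerivAt_vortexPotential hθ).fderiv, vortexGradient,
    _root_.neg_apply, _root_.sum_apply]
  refine congrArg _ (sum_congr rfl fun i _ => sum_congr rfl fun j _ => ?_)
  split_ifs <;> simp [coordDiff_apply]

lemma iteratedFDeriv_two_vortexPotential_apply (hθ : IsCollisionFree θ) (v w : Fin N → ℝ) :
    iteratedFDeriv ℝ 2 (vortexPotential N) θ ![v, w] =
      -∑ i, ∑ j, if i < j then
        pairPotentialDeriv2 (θ i - θ j) * (v i - v j) * (w i - w j) else 0 := by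
  have hfderiv : fderiv ℝ (vortexPotential N) =ᶠ[𝓝 θ] vortexGradient :=
    hθ.eventually_nhds.mono fun θ' hθ' => (hasFDerivAt_vortexPotential hθ').fderiv
  rw [iteratedFDeriv_two_apply, hfderiv.fderiv_eq, (hasFDerivAt_vortexGradient hθ).fderiv]
  simp only [vortexHessianForm, _root_.neg_apply, _root_.sum_apply]
  refine congrArg _ (sum_congr rfl fun i _ => sum_congr rfl fun j _ => ?_)
  split_ifs <;> simp [coordDiff_apply, mul_assoc]

end VortexPotential

section SymmetricCirculant

variable {K : Type*} [Field K] {a b c : K}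

lemma circulant_mulVec_ones :
    circulant ![a, b, c, b] *ᵥ ![1, 1, 1, 1] = (a + 2 * b + c) • ![1, 1, 1, 1] := by
  ext k; fin_cases k <;> simp [mulVec, dotProduct, Fin.sum_univ_four] <;> ring

lemma circulant_mulVec_alternating :
    circulant ![a, b, c, b] *ᵥ ![1, -1, 1, -1] = (a - 2 * b + c) • ![1, -1, 1, -1] := by
  ext k; fin_cases k <;> simp [mulVec, dotProduct, Fin.sum_univ_four] <;> ring

lemma circulant_mulVec_antipodal_zero :
    circulant ![a, b, c, b] *ᵥ ![1, 0, -1, 0] = (a - c) • ![1, 0, -1, 0] := by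
  ext k; fin_cases k <;> simp [mulVec, dotProduct, Fin.sum_univ_four] <;> ring

lemma circulant_mulVec_antipodal_one :
    circulant ![a, b, c, b] *ᵥ ![0, 1, 0, -1] = (a - c) • ![0, 1, 0, -1] := by
  ext k; fin_cases k <;> simp [mulVec, dotProduct, Fin.sum_univ_four] <;> ring

lemma linearIndependent_antipodal :
    LinearIndependent K ![(![1, 0, -1, 0] : Fin 4 → K), ![0, 1, 0, -1]] := by
  refine LinearIndependent.pair_iff.mpr fun s t hst => ⟨?_, ?_⟩
  · simpa using congrFun hst 0
  · simpa using congrFun hst 1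

lemma eq_or_eq_or_eq_of_circulant_mulVec_eq_smul [NeZero (2 : K)] {μ : K} {v : Fin 4 → K}
    (hv : v ≠ 0) (h : circulant ![a, b, c, b] *ᵥ v = μ • v) :
    μ = a + 2 * b + c ∨ μ = a - 2 * b + c ∨ μ = a - c := by
  have e0 := congrFun h 0
  have e1 := congrFun h 1
  have e2 := congrFun h 2
  have e3 := congrFun h 3
  simp only [mulVec, dotProduct, Fin.sum_univ_four, circulant_apply, Pi.smul_apply, smul_eq_mul,
    Fin.isValue, Fin.reduceSub, zero_sub, sub_zero, sub_self, neg_zero, cons_val_zero,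
    cons_val_one, Matrix.cons_val] at e0 e1 e2 e3
  by_contra! hμ
  obtain ⟨hμ₁, hμ₂, hμ₃⟩ := hμ
  -- the coordinates of `v` along the four eigenvectors, each killed by `μ - λ` for its `λ`
  have hsum : v 0 + v 1 + v 2 + v 3 = 0 := by
    refine (mul_eq_zero.mp ?_).resolve_left (sub_ne_zero.mpr hμ₁)
    linear_combination -(e0 + e1 + e2 + e3)
  have halt : v 0 - v 1 + v 2 - v 3 = 0 := by
    refine (mul_eq_zero.mp ?_).resolve_left (sub_ne_zero.mpr hμ₂)
    linear_combination -(e0 - e1 + e2 - e3)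
  have h02 : v 0 - v 2 = 0 := by
    refine (mul_eq_zero.mp ?_).resolve_left (sub_ne_zero.mpr hμ₃)
    linear_combination -(e0 - e2)
  have h13 : v 1 - v 3 = 0 := by
    refine (mul_eq_zero.mp ?_).resolve_left (sub_ne_zero.mpr hμ₃)
    linear_combination -(e1 - e3)
  have of_four_mul : ∀ x : K, 2 * (2 * x) = 0 → x = 0 := by simp [two_ne_zero]
  have hv0 : v 0 = 0 := of_four_mul _ (by linear_combination hsum + halt + 2 * h02)
  have hv1 : v 1 = 0 := of_four_mul _ (by linear_combination hsum - halt + 2 * h13)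
  have hv2 : v 2 = 0 := of_four_mul _ (by linear_combination hsum + halt - 2 * h02)
  have hv3 : v 3 = 0 := of_four_mul _ (by linear_combination hsum - halt - 2 * h13)
  exact hv (funext fun k => by fin_cases k <;> assumption)

lemma exists_ne_zero_circulant_mulVec_eq_smul_iff [NeZero (2 : K)] (μ : K) :
    (∃ v : Fin 4 → K, v ≠ 0 ∧ circulant ![a, b, c, b] *ᵥ v = μ • v) ↔
      μ = a + 2 * b + c ∨ μ = a - 2 * b + c ∨ μ = a - c := by
  refine ⟨fun ⟨v, hv, h⟩ => eq_or_eq_or_eq_of_circulant_mulVec_eq_smul hv h, ?_⟩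
  have hne : ∀ v : Fin 4 → K, v 0 ≠ 0 → v ≠ 0 := fun v h0 hv => h0 (congrFun hv 0)
  rintro (rfl | rfl | rfl)
  · exact ⟨_, hne _ (by simp), circulant_mulVec_ones⟩
  · exact ⟨_, hne _ (by simp), circulant_mulVec_alternating⟩
  · exact ⟨_, hne _ (by simp), circulant_mulVec_antipodal_zero⟩

end SymmetricCirculant

lemma cos_three_pi_div_two : cos (3 * π / 2) = 0 := by
  rw [show 3 * π / 2 = π / 2 + π by ring, cos_add_pi, cos_pi_div_two, neg_zero]

lemma sin_three_pi_div_two : sin (3 * π / 2) = -1 := by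
  rw [show 3 * π / 2 = π / 2 + π by ring, sin_add_pi, sin_pi_div_two]

lemma isCollisionFree_square : IsCollisionFree ![0, π / 2, π, 3 * π / 2] := by
  intro i j
  fin_cases i <;> fin_cases j <;>
    norm_num [cos_sub, cos_three_pi_div_two, sin_three_pi_div_two]

lemma fderiv_vortexPotential_square (v : Fin 4 → ℝ) :
    fderiv ℝ (vortexPotential 4) ![0, π / 2, π, 3 * π / 2] v = 0 := by
  rw [fderiv_vortexPotential_apply isCollisionFree_square]
  simp [Fin.sum_univ_four, pairPotentialDeriv, cos_sub, sin_sub, cos_three_pi_div_two,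
    sin_three_pi_div_two]
  ring

lemma vortexHessian_square :
    vortexHessian 4 ![0, π / 2, π, 3 * π / 2] = circulant ![1 / 4, -1 / 2, 3 / 4, -1 / 2] := by
  ext k l
  rw [vortexHessian, iteratedFDeriv_two_vortexPotential_apply isCollisionFree_square]
  fin_cases k <;> fin_cases l <;>
    simp [Fin.sum_univ_four, pairPotentialDeriv2, cos_sub, cos_three_pi_div_two,
      sin_three_pi_div_two, Pi.single_apply] <;> norm_num

/-- For `N = 4` and the regular 4-gon `θ = (0, π/2, π, 3π/2)`, `θ` is a
critical point of `V`, and the Hessian of `V` at `θ` has eigenvalues `0, 2, -1/2` with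
`-1/2` of multiplicity two; in particular the Hessian has both a strictly positive and a
strictly negative eigenvalue, so the 4-gon is a nondegenerate saddle point of `V`. -/
theorem four_gon_saddle :
    (∀ j : Fin 4,
      fderiv ℝ (vortexPotential 4) ![0, π / 2, π, 3 * π / 2] (Pi.single j 1) = 0) ∧
    (∀ μ : ℝ, (∃ v : Fin 4 → ℝ, v ≠ 0 ∧
        (vortexHessian 4 ![0, π / 2, π, 3 * π / 2]).mulVec v = μ • v) ↔
      (μ = 0 ∨ μ = 2 ∨ μ = -1/2)) ∧
    (∃ v w : Fin 4 → ℝ, LinearIndependent ℝ ![v, w] ∧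
      (vortexHessian 4 ![0, π / 2, π, 3 * π / 2]).mulVec v = (-1/2 : ℝ) • v ∧
      (vortexHessian 4 ![0, π / 2, π, 3 * π / 2]).mulVec w = (-1/2 : ℝ) • w) ∧
    (∃ μ : ℝ, 0 < μ ∧ ∃ v : Fin 4 → ℝ, v ≠ 0 ∧
      (vortexHessian 4 ![0, π / 2, π, 3 * π / 2]).mulVec v = μ • v) ∧
    (∃ μ : ℝ, μ < 0 ∧ ∃ v : Fin 4 → ℝ, v ≠ 0 ∧
      (vortexHessian 4 ![0, π / 2, π, 3 * π / 2]).mulVec v = μ • v) := by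
  rw [vortexHessian_square]
  have hspec : ∀ μ : ℝ, (∃ v : Fin 4 → ℝ, v ≠ 0 ∧
      circulant ![1 / 4, -1 / 2, 3 / 4, -1 / 2] *ᵥ v = μ • v) ↔ (μ = 0 ∨ μ = 2 ∨ μ = -1/2) := by
    intro μ
    rw [exists_ne_zero_circulant_mulVec_eq_smul_iff]
    norm_num
  refine ⟨fun _ => fderiv_vortexPotential_square _, hspec,
    ⟨_, _, linearIndependent_antipodal, ?_, ?_⟩,
    ⟨2, two_pos, (hspec 2).mpr (by norm_num)⟩, ⟨-1/2, by norm_num, (hspec _).mpr (by norm_num)⟩⟩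
  · rw [circulant_mulVec_antipodal_zero]
    norm_num
  · rw [circulant_mulVec_antipodal_one]
    norm_num
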